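/- If r_0 = 2 and r_n satisfies r_{n+1} = r_n^3 · 2 (3/2)^{n+1} for all n ≥ 0, then r_n = 2^{(1 + 3^{n+1} + 2n)/4} · 3^{(-3 + 3^{n+1} - 2n)/4}. -/
import Mathlib


/-- If `r_0 = 2` and `r_{n+1} = r_n^3 · 2 (3/2)^{n+1}`, then
`r_n = 2^{(1 + 3^{n+1} + 2n)/4} · 3^{(-3 + 3^{n+1} - 2n)/4}`. -/
theorem r_closed_form (r : ℕ → ℝ) (h0 : r 0 = 2)
    (hrec : ∀ n, r (n + 1) = (r n) ^ 3 * (2 * (3 / 2) ^ (n + 1))) :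
    ∀ n : ℕ, r n = (2 : ℝ) ^ ((1 + (3 : ℝ) ^ (n + 1) + 2 * n) / 4)
      * (3 : ℝ) ^ ((-3 + (3 : ℝ) ^ (n + 1) - 2 * n) / 4) := by
  have h2 : (0:ℝ) < 2 := by norm_num
  have h3 : (0:ℝ) < 3 := by norm_num
  intro n
  induction n with
  | zero =>
    simp only [h0]
    norm_num
  | succ n ih =>
    have hfac : (2:ℝ) * (3 / 2) ^ (n + 1)
        = (2:ℝ) ^ ((1:ℝ) - (n + 1)) * (3:ℝ) ^ ((n:ℝ) + 1) := by
      rw [div_pow, ← Real.rpow_natCast (3:ℝ) (n+1), ← Real.rpow_natCast (2:ℝ) (n+1),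
        Real.rpow_sub h2, Real.rpow_one]
      push_cast
      ring
    rw [hrec, ih, hfac, mul_pow, ← Real.rpow_natCast ((2:ℝ) ^ _) 3,
      ← Real.rpow_natCast ((3:ℝ) ^ ((-3 + (3 : ℝ) ^ (n + 1) - 2 * n) / 4)) 3,
      ← Real.rpow_mul h2.le, ← Real.rpow_mul h3.le]
    rw [mul_mul_mul_comm, ← Real.rpow_add h2, ← Real.rpow_add h3]
    congr 1 <;> · congr 1; push_cast; ring
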